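/- arXiv:0809.4964 — 6 statements merged into one kernel-verified Lean document; each statement's English description precedes it below -/
import Mathlib

section
/- A quasi-uniform space (X, 𝒰) is totally bounded if and only if every filter on X is doubly stable with respect to 𝒰. -/
open Filter Set

variable {X Y : Type*}

/-- Image of a set under a relation: `U(A) = {y : ∃ x ∈ A, (x,y) ∈ U}`. -/
def relImg (U : Set (X × X)) (A : Set X) : Set X := {y | ∃ x ∈ A, (x, y) ∈ U}

/-- Inverse image: `U⁻¹(A) = {y : ∃ x ∈ A, (y,x) ∈ U}`. -/
def relPre (U : Set (X × X)) (A : Set X) : Set X := {y | ∃ x ∈ A, (y, x) ∈ U}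

/-- A quasi-uniformity: a filter of reflexive relations, each containing
a relational square of a member. -/
structure IsQuasiUniformity (𝒰 : Filter (X × X)) : Prop where
  refl : ∀ U ∈ 𝒰, SetRel.id ⊆ U
  comp : ∀ U ∈ 𝒰, ∃ V ∈ 𝒰, SetRel.comp V V ⊆ U

/-- A filter is stable if `⋂_{F ∈ ℱ} U(F) ∈ ℱ` for all `U ∈ 𝒰`. -/
def IsStable (𝒰 : Filter (X × X)) (ℱ : Filter X) : Prop :=
  ∀ U ∈ 𝒰, (⋂ F ∈ ℱ.sets, relImg U F) ∈ ℱ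

/-- `U_ℱ = ⋂_{F ∈ ℱ} (U⁻¹(F) ∩ U(F))`. -/
def bigU (U : Set (X × X)) (ℱ : Filter X) : Set X :=
  ⋂ F ∈ ℱ.sets, (relPre U F ∩ relImg U F)

/-- A filter is doubly stable if `U_ℱ ∈ ℱ` for all `U ∈ 𝒰`. -/
def IsDoublyStable (𝒰 : Filter (X × X)) (ℱ : Filter X) : Prop :=
  ∀ U ∈ 𝒰, bigU U ℱ ∈ ℱ

/-- The conjugate relation. -/
def swapRel (U : Set (X × X)) : Set (X × X) := {p | (p.2, p.1) ∈ U}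

/-- Total boundedness: each symmetrized entourage admits a finite cover. -/
def IsTotallyBounded (𝒰 : Filter (X × X)) : Prop :=
  ∀ U ∈ 𝒰, ∃ 𝒜 : Set (Set X), 𝒜.Finite ∧ ⋃₀ 𝒜 = Set.univ ∧
    ∀ A ∈ 𝒜, A ×ˢ A ⊆ U ∩ swapRel U

/-
Forward: if `X` is covered by finitely many `U`-small sets, those pieces whose complement is not
in `ℱ` still cover a member of `ℱ`, and each of them meets every member of `ℱ`, so lies in `U_ℱ`.

Backward: if some `U` admits no finite cover by `U`-small sets, the complements of the `U`-small
sets have the finite intersection property, so lie in an ultrafilter `𝒢`. For `V ○ V ⊆ U` and `𝒢`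
an ultrafilter, any two points `y, z` of `V_𝒢` are joined through a point of
`{x | (y, x) ∈ V} ∩ {x | (x, z) ∈ V} ∈ 𝒢`; thus `V_𝒢` is `U`-small, and it cannot belong to `𝒢`.
-/

lemma mem_bigU_iff {U : Set (X × X)} {ℱ : Filter X} {y : X} :
    y ∈ bigU U ℱ ↔ ∀ F ∈ ℱ, y ∈ relPre U F ∧ y ∈ relImg U F := by
  simp only [bigU, mem_iInter₂, Filter.mem_sets, mem_inter_iff]

lemma prod_self_subset_swapRel {A : Set X} {U : Set (X × X)} (h : A ×ˢ A ⊆ U) :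
    A ×ˢ A ⊆ swapRel U :=
  fun _ hp => h ⟨hp.2, hp.1⟩

lemma isTotallyBounded_iff {𝒰 : Filter (X × X)} :
    IsTotallyBounded 𝒰 ↔ ∀ U ∈ 𝒰, ∃ 𝒜 : Set (Set X), 𝒜.Finite ∧ ⋃₀ 𝒜 = univ ∧
      ∀ A ∈ 𝒜, A ×ˢ A ⊆ U := by
  refine forall₂_congr fun U _ => exists_congr fun 𝒜 => and_congr_right' <| and_congr_right'
    <| forall₂_congr fun A _ => ⟨fun h => h.trans inter_subset_left, fun h => ?_⟩
  exact subset_inter h (prod_self_subset_swapRel h)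

lemma sUnion_compl_notMem_mem_of_finite_cover {𝒜 : Set (Set X)} (h𝒜 : 𝒜.Finite)
    (hcover : ⋃₀ 𝒜 = univ) (ℱ : Filter X) : ⋃₀ {A ∈ 𝒜 | Aᶜ ∉ ℱ} ∈ ℱ := by
  have hℱ : (⋂ A ∈ {A ∈ 𝒜 | Aᶜ ∈ ℱ}, Aᶜ) ∈ ℱ :=
    (biInter_mem (h𝒜.subset (sep_subset _ _))).2 fun A hA => hA.2
  refine mem_of_superset hℱ fun x hx => ?_
  obtain ⟨A, hA, hxA⟩ := mem_sUnion.1 (hcover ▸ mem_univ x)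
  refine ⟨A, ⟨hA, fun hAc => ?_⟩, hxA⟩
  exact mem_iInter₂.1 hx A ⟨hA, hAc⟩ hxA

lemma subset_bigU_of_compl_notMem {A : Set X} {U : Set (X × X)} {ℱ : Filter X}
    (hA : A ×ˢ A ⊆ U) (hAℱ : Aᶜ ∉ ℱ) : A ⊆ bigU U ℱ := by
  intro y hy
  refine mem_bigU_iff.2 fun F hF => ?_
  obtain ⟨x, hxA, hxF⟩ : (A ∩ F).Nonempty :=
    not_disjoint_iff_nonempty_inter.1 fun h => hAℱ (mem_of_superset hF h.subset_compl_left)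
  exact ⟨⟨x, hxF, hA ⟨hy, hxA⟩⟩, ⟨x, hxF, hA ⟨hxA, hy⟩⟩⟩

theorem IsTotallyBounded.isDoublyStable {𝒰 : Filter (X × X)} (h : IsTotallyBounded 𝒰)
    (ℱ : Filter X) : IsDoublyStable 𝒰 ℱ := by
  intro U hU
  obtain ⟨𝒜, h𝒜, hcover, hsmall⟩ := isTotallyBounded_iff.1 h U hU
  refine mem_of_superset (sUnion_compl_notMem_mem_of_finite_cover h𝒜 hcover ℱ) ?_
  exact sUnion_subset fun A hA => subset_bigU_of_compl_notMem (hsmall A hA.1) hA.2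

lemma Ultrafilter.setOf_rel_mem_of_forall_mem_relPre {𝒢 : Ultrafilter X} {V : Set (X × X)}
    {y : X} (hy : ∀ G ∈ 𝒢, y ∈ relPre V G) : {x | (y, x) ∈ V} ∈ 𝒢 :=
  Ultrafilter.frequently_iff_eventually.1 (frequently_iff.2 fun hG => hy _ hG)

lemma Ultrafilter.setOf_rel_mem_of_forall_mem_relImg {𝒢 : Ultrafilter X} {V : Set (X × X)}
    {y : X} (hy : ∀ G ∈ 𝒢, y ∈ relImg V G) : {x | (x, y) ∈ V} ∈ 𝒢 :=
  Ultrafilter.frequently_iff_eventually.1 (frequently_iff.2 fun hG => hy _ hG)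

lemma Ultrafilter.bigU_prod_self_subset_comp (𝒢 : Ultrafilter X) (V : Set (X × X)) :
    bigU V 𝒢 ×ˢ bigU V 𝒢 ⊆ SetRel.comp V V := by
  rintro ⟨y, z⟩ ⟨hy, hz⟩
  have hVy := setOf_rel_mem_of_forall_mem_relPre fun G hG => (mem_bigU_iff.1 hy G hG).1
  have hVz := setOf_rel_mem_of_forall_mem_relImg fun G hG => (mem_bigU_iff.1 hz G hG).2
  obtain ⟨x, hyx, hxz⟩ := Ultrafilter.nonempty_of_mem (inter_mem hVy hVz)
  exact ⟨x, hyx, hxz⟩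

lemma exists_ultrafilter_forall_compl_mem {U : Set (X × X)}
    (hU : ¬∃ 𝒜 : Set (Set X), 𝒜.Finite ∧ ⋃₀ 𝒜 = univ ∧ ∀ A ∈ 𝒜, A ×ˢ A ⊆ U) :
    ∃ 𝒢 : Ultrafilter X, ∀ A : Set X, A ×ˢ A ⊆ U → Aᶜ ∈ 𝒢 := by
  obtain ⟨𝒢, h𝒢⟩ := Ultrafilter.exists_ultrafilter_of_finite_inter_nonempty
    {B : Set X | Bᶜ ×ˢ Bᶜ ⊆ U} fun T hT => by
      by_contra hempty
      refine hU ⟨compl '' T, T.finite_toSet.image _, ?_, ?_⟩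
      · rw [← compl_sInter, not_nonempty_iff_eq_empty.1 hempty, compl_empty]
      · rintro _ ⟨B, hB, rfl⟩
        exact hT hB
  exact ⟨𝒢, fun A hA => h𝒢 (show Aᶜᶜ ×ˢ Aᶜᶜ ⊆ U by rwa [compl_compl])⟩

theorem isTotallyBounded_of_forall_ultrafilter {𝒰 : Filter (X × X)} (h𝒰 : IsQuasiUniformity 𝒰)
    (h : ∀ 𝒢 : Ultrafilter X, IsDoublyStable 𝒰 𝒢) : IsTotallyBounded 𝒰 := by
  refine isTotallyBounded_iff.2 fun U hU => ?_
  by_contra hnot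
  obtain ⟨V, hV, hVU⟩ := h𝒰.comp U hU
  obtain ⟨𝒢, h𝒢⟩ := exists_ultrafilter_forall_compl_mem hnot
  have hsmall : bigU V 𝒢 ×ˢ bigU V 𝒢 ⊆ U := (𝒢.bigU_prod_self_subset_comp V).trans hVU
  exact Ultrafilter.compl_mem_iff_notMem.1 (h𝒢 _ hsmall) (h 𝒢 V hV)

theorem stmt1 (𝒰 : Filter (X × X)) (h𝒰 : IsQuasiUniformity 𝒰) :
    IsTotallyBounded 𝒰 ↔ ∀ ℱ : Filter X, ℱ.NeBot → IsDoublyStable 𝒰 ℱ :=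
  ⟨fun h ℱ _ => h.isDoublyStable ℱ,
    fun h => isTotallyBounded_of_forall_ultrafilter h𝒰 fun 𝒢 => h 𝒢 𝒢.neBot⟩
end

section
/- Let (X, 𝒰) be a quasi-uniform space possessing an entourage V ∈ 𝒰 such that for each x ∈ X, either V(x) = {x} or V⁻¹(x) = {x}. Then for every doubly stable filter ℱ on (X, 𝒰), the set C(ℱ) of double cluster points of ℱ belongs to ℱ, and consequently the Künzi–Ryser condition holds: for every U ∈ 𝒰 there is F ∈ ℱ with F ⊆ U⁻¹(C(ℱ)) ∩ U(C(ℱ)). -/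
open Filter Set

variable {X Y : Type*}

/-- The 2-envelope of a filter. -/
def envelope (𝒰 : Filter (X × X)) (ℱ : Filter X) : Filter X :=
  Filter.generate {S | ∃ U ∈ 𝒰, ∃ F ∈ ℱ, S = relPre U F ∩ relImg U F}

/-- The filter `ℱ_𝒰` generated by `{U_ℱ : U ∈ 𝒰}`. -/
def filterU (𝒰 : Filter (X × X)) (ℱ : Filter X) : Filter X :=
  Filter.generate {S | ∃ U ∈ 𝒰, S = bigU U ℱ}

/-- `τ(𝒰)`-cluster points of a filter. -/
def fwdCluster (𝒰 : Filter (X × X)) (ℱ : Filter X) : Set X :=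
  {x | ∀ F ∈ ℱ, ∀ U ∈ 𝒰, ∃ y ∈ F, (x, y) ∈ U}

/-- `τ(𝒰⁻¹)`-cluster points of a filter. -/
def bwdCluster (𝒰 : Filter (X × X)) (ℱ : Filter X) : Set X :=
  {x | ∀ F ∈ ℱ, ∀ U ∈ 𝒰, ∃ y ∈ F, (y, x) ∈ U}

/-- The set of double cluster points of a filter. -/
def doubleCluster (𝒰 : Filter (X × X)) (ℱ : Filter X) : Set X :=
  fwdCluster 𝒰 ℱ ∩ bwdCluster 𝒰 ℱ

/-- The basic entourage `U_D = U_+ ∩ U_-` of the stability quasi-uniformity. -/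
def UD (U : Set (X × X)) : Set (Filter X × Filter X) :=
  {p | (⋂ F ∈ p.1.sets, relImg U F) ∈ p.2 ∧ (⋂ G ∈ p.2.sets, relPre U G) ∈ p.1}

/-! Each point `x` is isolated on one side by `V`, so a point of `V_ℱ`, which is `V`-related to
every member of `ℱ` in both directions, lies in every member of `ℱ`. Reflexivity of the
entourages makes every point of the kernel of `ℱ` a double cluster point, hence `C(ℱ) ⊇ V_ℱ ∈ ℱ`;
the Künzi–Ryser condition is then witnessed by `F = C(ℱ)` itself. -/

theorem bigU_subset_ker {V : Set (X × X)}
    (hpt : ∀ x : X, {y | (x, y) ∈ V} = {x} ∨ {y | (y, x) ∈ V} = {x}) (ℱ : Filter X) :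
    bigU V ℱ ⊆ ℱ.ker := by
  intro x hx
  rw [Filter.mem_ker]
  intro F hF
  obtain ⟨⟨z, hzF, hxz⟩, ⟨y, hyF, hyx⟩⟩ : x ∈ relPre V F ∩ relImg V F := mem_iInter₂.mp hx F hF
  rcases hpt x with h | h
  · obtain rfl : z = x := by rw [← mem_singleton_iff, ← h]; exact hxz
    exact hzF
  · obtain rfl : y = x := by rw [← mem_singleton_iff, ← h]; exact hyx
    exact hyF

theorem subset_relPre_inter_relImg {U : Set (X × X)} (hU : SetRel.id ⊆ U) (A : Set X) :
    A ⊆ relPre U A ∩ relImg U A :=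
  fun x hx => ⟨⟨x, hx, hU rfl⟩, ⟨x, hx, hU rfl⟩⟩

theorem ker_subset_doubleCluster {𝒰 : Filter (X × X)} (hrefl : ∀ U ∈ 𝒰, SetRel.id ⊆ U)
    (ℱ : Filter X) : ℱ.ker ⊆ doubleCluster 𝒰 ℱ := fun x hx =>
  ⟨fun F hF U hU => ⟨x, Filter.mem_ker.mp hx F hF, hrefl U hU rfl⟩,
    fun F hF U hU => ⟨x, Filter.mem_ker.mp hx F hF, hrefl U hU rfl⟩⟩

theorem stmt2 (𝒰 : Filter (X × X)) (h𝒰 : IsQuasiUniformity 𝒰)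
    (V : Set (X × X)) (hV : V ∈ 𝒰)
    (hpt : ∀ x : X, {y | (x, y) ∈ V} = {x} ∨ {y | (y, x) ∈ V} = {x})
    (ℱ : Filter X) (hds : IsDoublyStable 𝒰 ℱ) :
    doubleCluster 𝒰 ℱ ∈ ℱ ∧
      ∀ U ∈ 𝒰, ∃ F ∈ ℱ,
        F ⊆ relPre U (doubleCluster 𝒰 ℱ) ∩ relImg U (doubleCluster 𝒰 ℱ) := by
  have hC : doubleCluster 𝒰 ℱ ∈ ℱ :=
    mem_of_superset (hds V hV)
      ((bigU_subset_ker hpt ℱ).trans (ker_subset_doubleCluster h𝒰.refl ℱ))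
  exact ⟨hC, fun U hU => ⟨_, hC, subset_relPre_inter_relImg (h𝒰.refl U hU) _⟩⟩
end

section
/- Let X = ℕ (positive integers) and 𝒰 the quasi-uniformity generated by the subbase consisting of the usual order relation ≤ and all relations ({x} × X) ∪ (X × (X ∖ {x})) for x ∈ X. Then every stable filter on (X, 𝒰) has nonempty intersection (hence a τ(𝒰^s)-cluster point); in particular every doubly stable filter on (X, 𝒰) has a double cluster point. -/
open Filter Set

variable {X Y : Type*}

/-- The order entourage on the positive integers. -/
def leRel : Set (ℕ+ × ℕ+) := {p | p.1 ≤ p.2}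

/-- The transitive entourage `({x} × X) ∪ (X × (X ∖ {x}))`. -/
def txRel (x : ℕ+) : Set (ℕ+ × ℕ+) :=
  ({x} ×ˢ (Set.univ : Set ℕ+)) ∪ ((Set.univ : Set ℕ+) ×ˢ ({x}ᶜ : Set ℕ+))

/-- The quasi-uniformity generated by the subbase consisting of `≤` and
the relations `txRel x`. -/
def natQU : Filter (ℕ+ × ℕ+) := Filter.generate (insert leRel (Set.range txRel))

/-!
A stable filter `ℱ` contains `S = ⋂_{F ∈ ℱ} ↑F`, the intersection of the upper sets of its
members; let `m` be the least element of `S`. If some `F ∈ ℱ` missed `m`, stability for the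
entourage `txRel m` would put `{m}ᶜ` in `ℱ`, hence `S ∖ {m} ∈ ℱ`, and `m ∈ ↑(S ∖ {m})` would give
an element of `S` strictly below `m`. So `m` lies in every member of `ℱ`, and by reflexivity of
the entourages it is a double cluster point.
-/

section General

variable {𝒰 : Filter (X × X)} {ℱ : Filter X}

lemma mem_relImg_of_mem_iInter {U : Set (X × X)} {F : Set X} {y : X}
    (hy : y ∈ ⋂ G ∈ ℱ.sets, relImg U G) (hF : F ∈ ℱ) : y ∈ relImg U F :=
  mem_iInter₂.1 hy F hF

lemma IsDoublyStable.isStable (hds : IsDoublyStable 𝒰 ℱ) : IsStable 𝒰 ℱ := fun U hU =>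
  mem_of_superset (hds U hU) fun _ hy => mem_iInter₂.2 fun F hF => (mem_iInter₂.1 hy F hF).2

lemma mem_doubleCluster_of_mem_sInter (hrefl : ∀ U ∈ 𝒰, SetRel.id ⊆ U) {x : X}
    (hx : x ∈ ⋂₀ ℱ.sets) : x ∈ doubleCluster 𝒰 ℱ :=
  ⟨fun F hF U hU => ⟨x, hx F hF, hrefl U hU rfl⟩,
    fun F hF U hU => ⟨x, hx F hF, hrefl U hU rfl⟩⟩

end General

lemma leRel_mem_natQU : leRel ∈ natQU :=
  mem_generate_of_mem (mem_insert _ _)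

lemma txRel_mem_natQU (x : ℕ+) : txRel x ∈ natQU :=
  mem_generate_of_mem (mem_insert_of_mem _ ⟨x, rfl⟩)

lemma id_subset_of_mem_natQU {U : Set (ℕ+ × ℕ+)} (hU : U ∈ natQU) : SetRel.id ⊆ U := by
  suffices h : 𝓟 (SetRel.id : Set (ℕ+ × ℕ+)) ≤ natQU from h hU
  rw [natQU, le_generate_iff]
  rintro S (rfl | ⟨x, rfl⟩) ⟨a, b⟩ (rfl : a = b)
  · exact le_refl a
  · rcases eq_or_ne a x with rfl | hne
    · exact Or.inl ⟨rfl, trivial⟩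
    · exact Or.inr ⟨trivial, hne⟩

lemma relImg_txRel_subset {m : ℕ+} {F : Set ℕ+} (hm : m ∉ F) : relImg (txRel m) F ⊆ {m}ᶜ := by
  rintro y ⟨z, hzF, ⟨rfl, -⟩ | ⟨-, hy⟩⟩
  · exact absurd hzF hm
  · exact hy

lemma IsStable.compl_singleton_mem {ℱ : Filter ℕ+} (hs : IsStable natQU ℱ) {m : ℕ+}
    {F : Set ℕ+} (hF : F ∈ ℱ) (hm : m ∉ F) : ({m}ᶜ : Set ℕ+) ∈ ℱ :=
  mem_of_superset (hs _ (txRel_mem_natQU m)) fun _ hy =>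
    relImg_txRel_subset hm (mem_relImg_of_mem_iInter hy hF)

lemma IsStable.sInter_nonempty {ℱ : Filter ℕ+} [ℱ.NeBot] (hs : IsStable natQU ℱ) :
    (⋂₀ ℱ.sets).Nonempty := by
  set S := ⋂ F ∈ ℱ.sets, relImg leRel F
  have hS : S ∈ ℱ := hs leRel leRel_mem_natQU
  obtain ⟨m, hmS, hmin⟩ := wellFounded_lt.has_min S (nonempty_of_mem hS)
  refine ⟨m, fun F hF => by_contra fun hmF => ?_⟩
  have hSm : S ∩ {m}ᶜ ∈ ℱ := inter_mem hS (hs.compl_singleton_mem hF hmF)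
  obtain ⟨x, ⟨hxS, hxm⟩, hxle⟩ := mem_relImg_of_mem_iInter hmS hSm
  exact hmin x hxS (lt_of_le_of_ne hxle hxm)

theorem stmt3 :
    (∀ ℱ : Filter ℕ+, ℱ.NeBot → IsStable natQU ℱ → (⋂₀ ℱ.sets).Nonempty) ∧
    (∀ ℱ : Filter ℕ+, ℱ.NeBot → IsDoublyStable natQU ℱ →
      (doubleCluster natQU ℱ).Nonempty) := by
  refine ⟨fun ℱ _ hs => hs.sInter_nonempty, fun ℱ _ hds => ?_⟩
  obtain ⟨m, hm⟩ := hds.isStable.sInter_nonempty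
  exact ⟨m, mem_doubleCluster_of_mem_sInter (fun _ => id_subset_of_mem_natQU) hm⟩
end

section
/- Let X = ℕ and 𝒰 the quasi-uniformity generated by the subbase consisting of ≤ and the relations ({x} × X) ∪ (X × (X ∖ {x})) for x ∈ X. Let 𝒢 be the filter on X generated by the base {{1} ∪ G' : G' cofinite in X}. Then 𝒢 is a doubly stable filter on (X, 𝒰) whose set of double cluster points is {1}, yet with U = ≤ no member G of 𝒢 satisfies G ⊆ U⁻¹({1}); hence the Künzi–Ryser condition fails for (X, 𝒰). -/
open Filter Set

variable {X Y : Type*}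

/-- The filter generated by the base `{{1} ∪ G' : G' cofinite}`. -/
def 𝒢nat : Filter ℕ+ :=
  Filter.generate {A : Set ℕ+ | ∃ G' : Set ℕ+, G'ᶜ.Finite ∧ A = {1} ∪ G'}


/-!
The members of `𝒢nat` are the cofinite sets containing `1`, and a basic entourage
`leRel ∩ ⋂ x ∈ T, txRel x` (`T` finite) relates `a ≤ b` unless `b ∈ T` and `a ≠ b`.
So every `y ∉ T` is reached from `1` and reaches arbitrarily large points:
`{1} ∪ Tᶜ ⊆ U_𝒢`, which is double stability. The entourage `leRel ∩ txRel z` and the member `{1} ∪ Ioi z` show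
that no `z ≠ 1` is a double cluster point. But `leRel⁻¹({1}) = {1}` contains no (infinite)
member of `𝒢nat`.
-/

section Relations

variable {X : Type*}

lemma relImg_mono {U V : Set (X × X)} (h : U ⊆ V) (A : Set X) : relImg U A ⊆ relImg V A :=
  fun _ ⟨x, hx, hxy⟩ => ⟨x, hx, h hxy⟩

lemma relPre_mono {U V : Set (X × X)} (h : U ⊆ V) (A : Set X) : relPre U A ⊆ relPre V A :=
  fun _ ⟨x, hx, hyx⟩ => ⟨x, hx, h hyx⟩

lemma bigU_mono {U V : Set (X × X)} (h : U ⊆ V) (ℱ : Filter X) : bigU U ℱ ⊆ bigU V ℱ :=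
  iInter₂_mono fun A _ => inter_subset_inter (relPre_mono h A) (relImg_mono h A)

lemma mem_doubleCluster_of_forall {𝒰 : Filter (X × X)} {ℱ : Filter X} {x : X}
    (h𝒰 : ∀ U ∈ 𝒰, (x, x) ∈ U) (hℱ : ∀ F ∈ ℱ, x ∈ F) : x ∈ doubleCluster 𝒰 ℱ :=
  ⟨fun F hF U hU => ⟨x, hℱ F hF, h𝒰 U hU⟩, fun F hF U hU => ⟨x, hℱ F hF, h𝒰 U hU⟩⟩

end Relations

lemma txRel_injective : Function.Injective txRel := by
  intro x y h
  have hy : ((y, x) : ℕ+ × ℕ+) ∈ txRel x := h ▸ Or.inl ⟨rfl, trivial⟩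
  rcases hy with ⟨hyx, -⟩ | ⟨-, hxx⟩
  · exact (hyx : y = x).symm
  · exact absurd rfl hxx

lemma mem_leRel_inter_txRel_iff {T : Set ℕ+} {p : ℕ+ × ℕ+} :
    p ∈ leRel ∩ ⋂ x ∈ T, txRel x ↔ p.1 ≤ p.2 ∧ (p.2 ∈ T → p.1 = p.2) := by
  simp only [leRel, txRel, mem_inter_iff, mem_iInter, mem_union, mem_prod, mem_singleton_iff,
    mem_univ, and_true, true_and, mem_compl_iff, mem_ofPred_eq]
  refine and_congr_right fun _ => ⟨fun h hT => (h _ hT).resolve_right (not_not.2 rfl), ?_⟩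
  intro h x hx
  rcases eq_or_ne p.2 x with rfl | hne
  · exact Or.inl (h hx)
  · exact Or.inr hne

lemma exists_finite_leRel_inter_txRel_subset {U : Set (ℕ+ × ℕ+)} (hU : U ∈ natQU) :
    ∃ T : Set ℕ+, T.Finite ∧ leRel ∩ ⋂ x ∈ T, txRel x ⊆ U := by
  obtain ⟨t, hts, htf, hsub⟩ := mem_generate_iff.1 hU
  refine ⟨txRel ⁻¹' t, htf.preimage txRel_injective.injOn, ?_⟩
  rintro p ⟨hle, htx⟩
  refine hsub fun s hs => ?_
  rcases hts hs with rfl | ⟨x, rfl⟩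
  · exact hle
  · exact mem_iInter₂.1 htx x hs

lemma leRel_inter_txRel_mem_natQU (T : Set ℕ+) (hT : T.Finite) :
    leRel ∩ ⋂ x ∈ T, txRel x ∈ natQU :=
  inter_mem leRel_mem_natQU
    ((biInter_mem hT).2 fun x _ => mem_generate_of_mem (mem_insert_of_mem _ ⟨x, rfl⟩))

lemma diag_mem_of_mem_natQU {U : Set (ℕ+ × ℕ+)} (hU : U ∈ natQU) (a : ℕ+) :
    (a, a) ∈ U := by
  obtain ⟨T, -, hTU⟩ := exists_finite_leRel_inter_txRel_subset hU
  exact hTU (mem_leRel_inter_txRel_iff.2 ⟨le_rfl, fun _ => rfl⟩)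

lemma 𝒢nat_eq_pure_sup_cofinite : 𝒢nat = pure 1 ⊔ cofinite := by
  refine le_antisymm ?_ ?_
  · rintro A ⟨h1, hfin⟩
    exact mem_generate_of_mem ⟨A, mem_cofinite.1 hfin, by
      rw [singleton_union, insert_eq_of_mem (mem_pure.1 h1)]⟩
  · refine le_generate_iff.2 ?_
    rintro _ ⟨G', hG', rfl⟩
    exact ⟨Or.inl rfl, mem_cofinite.2 (hG'.subset (compl_subset_compl.2 subset_union_right))⟩

lemma mem_𝒢nat_iff {A : Set ℕ+} : A ∈ 𝒢nat ↔ 1 ∈ A ∧ Aᶜ.Finite := by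
  rw [𝒢nat_eq_pure_sup_cofinite, mem_sup, mem_pure, mem_cofinite]

lemma union_compl_subset_bigU (T : Set ℕ+) (hT : T.Finite) :
    {1} ∪ Tᶜ ⊆ bigU (leRel ∩ ⋂ x ∈ T, txRel x) 𝒢nat := by
  intro y hy
  refine mem_iInter₂.2 fun F hF => ?_
  obtain ⟨h1F, hFc⟩ := mem_𝒢nat_iff.1 hF
  obtain ⟨a, ha⟩ := (hFc.union ((finite_Iio y).union hT)).infinite_compl.nonempty
  simp only [mem_compl_iff, mem_union, mem_Iio, not_or, not_lt, not_not] at ha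
  refine ⟨⟨a, ha.1, mem_leRel_inter_txRel_iff.2 ⟨ha.2.1, fun haT => absurd haT ha.2.2⟩⟩,
    ⟨1, h1F, mem_leRel_inter_txRel_iff.2 ⟨(one_le : 1 ≤ y), fun hyT => ?_⟩⟩⟩
  rcases hy with hy | hy
  · exact hy.symm
  · exact absurd hyT hy

lemma isDoublyStable_𝒢nat : IsDoublyStable natQU 𝒢nat := by
  intro U hU
  obtain ⟨T, hT, hTU⟩ := exists_finite_leRel_inter_txRel_subset hU
  have hmem : {1} ∪ Tᶜ ∈ 𝒢nat :=
    mem_𝒢nat_iff.2 ⟨Or.inl rfl, hT.subset (compl_subset_comm.1 subset_union_right)⟩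
  exact mem_of_superset hmem ((union_compl_subset_bigU T hT).trans (bigU_mono hTU 𝒢nat))

lemma doubleCluster_𝒢nat : doubleCluster natQU 𝒢nat = {1} := by
  have hone : 1 ∈ doubleCluster natQU 𝒢nat :=
    mem_doubleCluster_of_forall (fun _ hU => diag_mem_of_mem_natQU hU 1)
      fun _ hF => (mem_𝒢nat_iff.1 hF).1
  refine subset_antisymm (fun z ⟨_, hz⟩ => ?_) (singleton_subset_iff.2 hone)
  have hF : {1} ∪ Ioi z ∈ 𝒢nat :=
    mem_𝒢nat_iff.2 ⟨Or.inl rfl, (finite_Iic z).subset fun a ha =>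
      mem_Iic.2 (not_lt.1 fun h => ha (Or.inr h))⟩
  obtain ⟨y, hy, hyz⟩ := hz _ hF _ (leRel_inter_txRel_mem_natQU {z} (finite_singleton z))
  obtain rfl : y = z := (mem_leRel_inter_txRel_iff.1 hyz).2 rfl
  exact hy.resolve_right (lt_irrefl y)

lemma not_subset_relPre_leRel_one {G : Set ℕ+} (hG : G ∈ 𝒢nat) :
    ¬ G ⊆ relPre leRel {1} := by
  intro hsub
  have hinf : G.Infinite := by simpa using (mem_𝒢nat_iff.1 hG).2.infinite_compl
  obtain ⟨a, haG, ha1⟩ := (hinf.sdiff (finite_singleton 1)).nonempty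
  obtain ⟨_, rfl, ha⟩ := hsub haG
  exact ha1 (le_antisymm (ha : a ≤ 1) (one_le : 1 ≤ a))

theorem stmt4 :
    IsDoublyStable natQU 𝒢nat ∧
    doubleCluster natQU 𝒢nat = ({1} : Set ℕ+) ∧
    (∀ G ∈ 𝒢nat, ¬ G ⊆ relPre leRel ({1} : Set ℕ+)) ∧
    ¬ (∀ ℱ : Filter ℕ+, ℱ.NeBot → IsDoublyStable natQU ℱ → ∀ U ∈ natQU,
        ∃ F ∈ ℱ, F ⊆ relPre U (doubleCluster natQU ℱ) ∩
          relImg U (doubleCluster natQU ℱ)) := by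
  refine ⟨isDoublyStable_𝒢nat, doubleCluster_𝒢nat, fun _ => not_subset_relPre_leRel_one,
    fun hKR => ?_⟩
  have hne : 𝒢nat.NeBot := by
    rw [𝒢nat_eq_pure_sup_cofinite]
    exact sup_neBot.2 (Or.inl pure_neBot)
  obtain ⟨F, hF, hsub⟩ := hKR 𝒢nat hne isDoublyStable_𝒢nat leRel leRel_mem_natQU
  rw [doubleCluster_𝒢nat] at hsub
  exact not_subset_relPre_leRel_one hF (hsub.trans inter_subset_left)
end

section
/- For every filter ℱ on a quasi-uniform space (X, 𝒰), the 2-envelope 𝒟_𝒰(ℱ) has the same set of τ(𝒰)-cluster points and the same set of τ(𝒰⁻¹)-cluster points as ℱ. -/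
open Filter Set

variable {X Y : Type*}

/-! Passing to the envelope only removes sets, so it can only add cluster points. Conversely, if
every `V`-neighbourhood of `x` meets `V⁻¹(F)`, then every `V ○ V`-neighbourhood of `x` meets `F`;
choosing `V ○ V ⊆ U` shows that a cluster point of the envelope is one of `ℱ`. -/

section

variable {𝒰 : Filter (X × X)} {ℱ 𝒢 : Filter X}

lemma fwdCluster_mono (𝒰 : Filter (X × X)) : Monotone (fwdCluster 𝒰) :=
  fun _ _ h _ hx F hF U hU => hx F (h hF) U hU

lemma bwdCluster_mono (𝒰 : Filter (X × X)) : Monotone (bwdCluster 𝒰) :=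
  fun _ _ h _ hx F hF U hU => hx F (h hF) U hU

lemma fwdCluster_subset_of_relPre_mem (h𝒰 : IsQuasiUniformity 𝒰)
    (h : ∀ V ∈ 𝒰, ∀ F ∈ ℱ, relPre V F ∈ 𝒢) : fwdCluster 𝒰 𝒢 ⊆ fwdCluster 𝒰 ℱ := by
  intro x hx F hF U hU
  obtain ⟨V, hV, hVU⟩ := h𝒰.comp U hU
  obtain ⟨y, ⟨z, hz, hyz⟩, hxy⟩ := hx _ (h V hV F hF) V hV
  exact ⟨z, hz, hVU ⟨y, hxy, hyz⟩⟩

lemma bwdCluster_subset_of_relImg_mem (h𝒰 : IsQuasiUniformity 𝒰)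
    (h : ∀ V ∈ 𝒰, ∀ F ∈ ℱ, relImg V F ∈ 𝒢) : bwdCluster 𝒰 𝒢 ⊆ bwdCluster 𝒰 ℱ := by
  intro x hx F hF U hU
  obtain ⟨V, hV, hVU⟩ := h𝒰.comp U hU
  obtain ⟨y, ⟨z, hz, hzy⟩, hyx⟩ := hx _ (h V hV F hF) V hV
  exact ⟨z, hz, hVU ⟨y, hzy, hyx⟩⟩

lemma le_envelope (h𝒰 : IsQuasiUniformity 𝒰) : ℱ ≤ envelope 𝒰 ℱ := by
  rw [envelope, le_generate_iff]
  rintro _ ⟨U, hU, F, hF, rfl⟩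
  exact mem_of_superset hF fun x hx => ⟨⟨x, hx, h𝒰.refl U hU rfl⟩, ⟨x, hx, h𝒰.refl U hU rfl⟩⟩

lemma relPre_inter_relImg_mem_envelope {U : Set (X × X)} {F : Set X} (hU : U ∈ 𝒰) (hF : F ∈ ℱ) :
    relPre U F ∩ relImg U F ∈ envelope 𝒰 ℱ :=
  mem_generate_of_mem ⟨U, hU, F, hF, rfl⟩

lemma relPre_mem_envelope {U : Set (X × X)} {F : Set X} (hU : U ∈ 𝒰) (hF : F ∈ ℱ) :
    relPre U F ∈ envelope 𝒰 ℱ :=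
  mem_of_superset (relPre_inter_relImg_mem_envelope hU hF) inter_subset_left

lemma relImg_mem_envelope {U : Set (X × X)} {F : Set X} (hU : U ∈ 𝒰) (hF : F ∈ ℱ) :
    relImg U F ∈ envelope 𝒰 ℱ :=
  mem_of_superset (relPre_inter_relImg_mem_envelope hU hF) inter_subset_right

end

theorem stmt7 (𝒰 : Filter (X × X)) (h𝒰 : IsQuasiUniformity 𝒰) (ℱ : Filter X) :
    fwdCluster 𝒰 (envelope 𝒰 ℱ) = fwdCluster 𝒰 ℱ ∧
      bwdCluster 𝒰 (envelope 𝒰 ℱ) = bwdCluster 𝒰 ℱ :=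
  ⟨(fwdCluster_subset_of_relPre_mem h𝒰 fun _ hV _ hF => relPre_mem_envelope hV hF).antisymm
      (fwdCluster_mono 𝒰 (le_envelope h𝒰)),
    (bwdCluster_subset_of_relImg_mem h𝒰 fun _ hV _ hF => relImg_mem_envelope hV hF).antisymm
      (bwdCluster_mono 𝒰 (le_envelope h𝒰))⟩
end

section
/- Let (X, 𝒰) and (Y, 𝒱) be quasi-uniform spaces and f : X → Y quasi-uniformly continuous. If ℱ is a doubly stable filter on (X, 𝒰), then the filter [f(ℱ)] on Y generated by {f(F) : F ∈ ℱ} is doubly stable on (Y, 𝒱). Moreover the induced map f_D : S_D(X) → S_D(Y), ℱ ↦ [f(ℱ)], is quasi-uniformly continuous with respect to the stability quasi-uniformities 𝒰_D and 𝒱_D. -/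
open Filter Set

variable {X Y : Type*}

/-- Quasi-uniform continuity. -/
def QUContinuous (𝒰 : Filter (X × X)) (𝒱 : Filter (Y × Y)) (f : X → Y) : Prop :=
  ∀ V ∈ 𝒱, ∃ U ∈ 𝒰, ∀ p ∈ U, (f p.1, f p.2) ∈ V

/-! If `f × f` maps `U` into `V`, then `f` maps `U(f⁻¹ G)` into `V(G)` and `U⁻¹(f⁻¹ G)` into
`V⁻¹(G)`. Since `f⁻¹ G ∈ ℱ` for every `G ∈ [f(ℱ)]`, `f` maps each intersection over `ℱ`
(defining `U_ℱ` or `U_D`) into the corresponding intersection over `[f(ℱ)]`. -/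

section

variable {f : X → Y} {U : Set (X × X)} {V : Set (Y × Y)}

theorem Set.MapsTo.relImg_preimage (hUV : MapsTo (Prod.map f f) U V) (G : Set Y) :
    MapsTo f (relImg U (f ⁻¹' G)) (relImg V G) := by
  rintro y ⟨x, hx, hxy⟩
  exact ⟨f x, hx, hUV hxy⟩

theorem Set.MapsTo.relPre_preimage (hUV : MapsTo (Prod.map f f) U V) (G : Set Y) :
    MapsTo f (relPre U (f ⁻¹' G)) (relPre V G) := by
  rintro y ⟨x, hx, hyx⟩
  exact ⟨f x, hx, hUV hyx⟩

theorem Set.MapsTo.iInter_relImg (hUV : MapsTo (Prod.map f f) U V) (ℱ : Filter X) :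
    MapsTo f (⋂ F ∈ ℱ.sets, relImg U F) (⋂ G ∈ (map f ℱ).sets, relImg V G) := by
  intro x hx
  simp only [mem_iInter] at hx ⊢
  exact fun G hG => hUV.relImg_preimage G (hx _ hG)

theorem Set.MapsTo.iInter_relPre (hUV : MapsTo (Prod.map f f) U V) (ℱ : Filter X) :
    MapsTo f (⋂ F ∈ ℱ.sets, relPre U F) (⋂ G ∈ (map f ℱ).sets, relPre V G) := by
  intro x hx
  simp only [mem_iInter] at hx ⊢
  exact fun G hG => hUV.relPre_preimage G (hx _ hG)

theorem Set.MapsTo.bigU_map (hUV : MapsTo (Prod.map f f) U V) (ℱ : Filter X) :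
    MapsTo f (bigU U ℱ) (bigU V (map f ℱ)) := by
  intro x hx
  simp only [bigU, mem_iInter, mem_inter_iff] at hx ⊢
  exact fun G hG => ⟨hUV.relPre_preimage G (hx _ hG).1, hUV.relImg_preimage G (hx _ hG).2⟩

theorem Filter.mem_map_of_mapsTo {ℱ : Filter X} {s : Set X} {t : Set Y} (hs : s ∈ ℱ)
    (hst : MapsTo f s t) : t ∈ map f ℱ :=
  mem_map.2 (mem_of_superset hs hst)

theorem IsDoublyStable.map {𝒰 : Filter (X × X)} {𝒱 : Filter (Y × Y)} {ℱ : Filter X}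
    (hf : QUContinuous 𝒰 𝒱 f) (hℱ : IsDoublyStable 𝒰 ℱ) : IsDoublyStable 𝒱 (map f ℱ) := by
  intro V hV
  obtain ⟨U, hU, hUV⟩ := hf V hV
  exact mem_map_of_mapsTo (hℱ U hU) (MapsTo.bigU_map hUV ℱ)

theorem map_mem_UD (hUV : MapsTo (Prod.map f f) U V) {ℱ 𝒢 : Filter X} (h : (ℱ, 𝒢) ∈ UD U) :
    (map f ℱ, map f 𝒢) ∈ UD V :=
  ⟨mem_map_of_mapsTo h.1 (hUV.iInter_relImg ℱ), mem_map_of_mapsTo h.2 (hUV.iInter_relPre 𝒢)⟩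

end

theorem stmt12_general (𝒰 : Filter (X × X)) (𝒱 : Filter (Y × Y))
    (f : X → Y) (hf : QUContinuous 𝒰 𝒱 f) :
    (∀ ℱ : Filter X, IsDoublyStable 𝒰 ℱ → IsDoublyStable 𝒱 (Filter.map f ℱ)) ∧
    (∀ V ∈ 𝒱, ∃ U ∈ 𝒰, ∀ ℱ 𝒢 : Filter X, IsDoublyStable 𝒰 ℱ →
      IsDoublyStable 𝒰 𝒢 → (ℱ, 𝒢) ∈ UD U →
        (Filter.map f ℱ, Filter.map f 𝒢) ∈ UD V) := by
  refine ⟨fun ℱ hℱ => hℱ.map hf, fun V hV => ?_⟩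
  obtain ⟨U, hU, hUV⟩ := hf V hV
  exact ⟨U, hU, fun ℱ 𝒢 _ _ h => map_mem_UD hUV h⟩

theorem stmt12 (𝒰 : Filter (X × X)) (𝒱 : Filter (Y × Y))
    (h𝒰 : IsQuasiUniformity 𝒰) (h𝒱 : IsQuasiUniformity 𝒱)
    (f : X → Y) (hf : QUContinuous 𝒰 𝒱 f) :
    (∀ ℱ : Filter X, IsDoublyStable 𝒰 ℱ → IsDoublyStable 𝒱 (Filter.map f ℱ)) ∧
    (∀ V ∈ 𝒱, ∃ U ∈ 𝒰, ∀ ℱ 𝒢 : Filter X, IsDoublyStable 𝒰 ℱ →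
      IsDoublyStable 𝒰 𝒢 → (ℱ, 𝒢) ∈ UD U →
        (Filter.map f ℱ, Filter.map f 𝒢) ∈ UD V) :=
  stmt12_general 𝒰 𝒱 f hf
end
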